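/- arXiv:0803.2979 — 7 statements merged into one kernel-verified Lean document; each statement's English description precedes it below -/
import Mathlib

section
/- Let d_1,...,d_n be self-adjoint unitaries (symmetries) in a unital C*-algebra A with a faithful tracial state τ such that τ(d_i d_j) = t_{i,j} for all i, j. Define d = Σ_i e_{i,i} ⊗ d_i in M_n(ℂ) ⊗ A. Then d is a self-adjoint unitary, and for all x, y ∈ M_n(ℂ), (Tr_n/n ⊗ τ)((x ⊗ 1) d (y ⊗ 1) d) = (1/n) Σ_{i,j} x_{i,j} y_{j,i} t_{i,j} = (Tr_n/n)(M_T(x) y), where M_T is the Schur multiplier with symbol T = (t_{i,j}). -/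
open scoped ComplexOrder

/-- If `d₁,…,dₙ` are symmetries in a unital C*-algebra with faithful tracial
state `τ` such that `τ(dᵢdⱼ) = t_{i,j}`, then `d = Σᵢ e_{i,i} ⊗ dᵢ` is a self-adjoint unitary
in `Mₙ(ℂ) ⊗ A` and `(Trₙ/n ⊗ τ)((x⊗1) d (y⊗1) d) = (1/n) Σ_{i,j} x_{i,j} y_{j,i} t_{i,j}
= (Trₙ/n)(M_T(x) y)`. -/
theorem stmt6 {n : ℕ} {A : Type*} [NormedRing A] [StarRing A] [CStarRing A]
    [NormedAlgebra ℂ A] [StarModule ℂ A]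
    (τ : A →ₗ[ℂ] ℂ) (hτ1 : τ 1 = 1) (hτpos : ∀ a, 0 ≤ τ (star a * a))
    (htr : ∀ a b, τ (a * b) = τ (b * a)) (hfaith : ∀ a, τ (star a * a) = 0 → a = 0)
    (d : Fin n → A) (hsa : ∀ i, IsSelfAdjoint (d i)) (hsq : ∀ i, d i * d i = 1)
    (t : Matrix (Fin n) (Fin n) ℂ) (ht : ∀ i j, τ (d i * d j) = t i j) :
    let dd : Matrix (Fin n) (Fin n) A := Matrix.diagonal d
    (star dd = dd ∧ dd * dd = 1) ∧
    ∀ x y : Matrix (Fin n) (Fin n) ℂ,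
      ((1 : ℂ) / n) * ∑ i, τ ((x.map (algebraMap ℂ A) * dd * y.map (algebraMap ℂ A) * dd) i i)
          = ((1 : ℂ) / n) * ∑ i, ∑ j, x i j * y j i * t i j ∧
      ((1 : ℂ) / n) * ∑ i, ∑ j, x i j * y j i * t i j
          = ((1 : ℂ) / n) * ((Matrix.of fun i j => t i j * x i j) * y).trace := by
  intro dd
  refine ⟨⟨?_, ?_⟩, ?_⟩
  · rw [show star dd = Matrix.diagonal (fun i => star (d i)) from Matrix.diagonal_conjTranspose d]
    exact congrArg Matrix.diagonal (funext fun i => hsa i)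
  · show Matrix.diagonal d * Matrix.diagonal d = 1
    rw [Matrix.diagonal_mul_diagonal]
    simp only [hsq]
    exact Matrix.diagonal_one
  · intro x y
    constructor
    · congr 1
      apply Finset.sum_congr rfl
      intro i _
      have : (x.map (algebraMap ℂ A) * dd * y.map (algebraMap ℂ A) * dd) i i
          = ∑ j, (algebraMap ℂ A (x i j) * d j) * (algebraMap ℂ A (y j i) * d i) := by
        have h1 : x.map (algebraMap ℂ A) * dd * y.map (algebraMap ℂ A) * dd
            = (x.map (algebraMap ℂ A) * dd) * (y.map (algebraMap ℂ A) * dd) := mul_assoc _ _ _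
        rw [h1, Matrix.mul_apply]
        apply Finset.sum_congr rfl
        intro j _
        rw [Matrix.mul_diagonal, Matrix.mul_diagonal]
        rfl
      rw [this, map_sum]
      apply Finset.sum_congr rfl
      intro j _
      have : (algebraMap ℂ A (x i j) * d j) * (algebraMap ℂ A (y j i) * d i)
          = (x i j * y j i) • (d j * d i) := by
        rw [Algebra.algebraMap_eq_smul_one, Algebra.algebraMap_eq_smul_one]
        simp only [smul_mul_assoc, one_mul, mul_smul_comm, smul_smul]
        rw [mul_comm (y j i)]
      rw [this, map_smul, smul_eq_mul, htr, ht]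
    · congr 1
      rw [Matrix.trace, Finset.sum_congr rfl]
      intro i _
      rw [Matrix.diag_apply, Matrix.mul_apply]
      apply Finset.sum_congr rfl
      intro j _
      simp [Matrix.of_apply]
      ring
end

section
/- Let φ(x) = Tr(Dx) with D = diag(λ_i), λ_i > 0, Σλ_i = 1. With d = Σ_i e_{i,i} ⊗ d_i as above (d_i symmetries in (A, τ) with τ(d_i d_j) = t_{i,j}), the element d lies in the centralizer of the state φ ⊗ τ on M_n(ℂ) ⊗ A, and (φ ⊗ τ)((x ⊗ 1) d (y ⊗ 1) d) = φ(M_T(x) y) for all x, y ∈ M_n(ℂ). -/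
open scoped ComplexOrder

/-- With `φ(x) = Tr(Dx)`, `D = diag(λᵢ)`, `λᵢ > 0`, `Σλᵢ = 1`, and
`d = Σᵢ e_{i,i} ⊗ dᵢ` where `dᵢ` are symmetries in `(A,τ)` with `τ(dᵢdⱼ) = t_{i,j}`, the
element `d` lies in the centralizer of `φ ⊗ τ` and
`(φ ⊗ τ)((x⊗1) d (y⊗1) d) = φ(M_T(x) y)`. -/
theorem stmt7 {n : ℕ} {A : Type*} [NormedRing A] [StarRing A] [CStarRing A]
    [NormedAlgebra ℂ A] [StarModule ℂ A]
    (lam : Fin n → ℝ) (hlam : ∀ i, 0 < lam i) (hsum : ∑ i, lam i = 1)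
    (τ : A →ₗ[ℂ] ℂ) (hτ1 : τ 1 = 1) (hτpos : ∀ a, 0 ≤ τ (star a * a))
    (htr : ∀ a b, τ (a * b) = τ (b * a)) (hfaith : ∀ a, τ (star a * a) = 0 → a = 0)
    (d : Fin n → A) (hsa : ∀ i, IsSelfAdjoint (d i)) (hsq : ∀ i, d i * d i = 1)
    (t : Matrix (Fin n) (Fin n) ℂ) (ht : ∀ i j, τ (d i * d j) = t i j) :
    let dd : Matrix (Fin n) (Fin n) A := Matrix.diagonal d
    let ψ : Matrix (Fin n) (Fin n) A → ℂ := fun m => ∑ i, (lam i : ℂ) * τ (m i i)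
    (∀ b : Matrix (Fin n) (Fin n) A, ψ (dd * b) = ψ (b * dd)) ∧
    ∀ x y : Matrix (Fin n) (Fin n) ℂ,
      ψ (x.map (algebraMap ℂ A) * dd * y.map (algebraMap ℂ A) * dd)
        = ((Matrix.diagonal fun i => (lam i : ℂ)) *
            ((Matrix.of fun i j => t i j * x i j) * y)).trace := by
  intro dd ψ
  constructor
  · intro b
    apply Finset.sum_congr rfl
    intro i _
    congr 1
    rw [Matrix.diagonal_mul, Matrix.mul_diagonal]
    exact htr (d i) (b i i)
  · intro x y
    have hentry : ∀ i : Fin n,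
        (x.map (algebraMap ℂ A) * dd * y.map (algebraMap ℂ A) * dd) i i
          = ∑ k, algebraMap ℂ A (x i k * y k i) * (d k * d i) := by
      intro i
      rw [Matrix.mul_diagonal, Matrix.mul_apply]
      rw [Finset.sum_mul]
      apply Finset.sum_congr rfl
      intro k _
      rw [Matrix.mul_diagonal, Matrix.map_apply, Matrix.map_apply, map_mul]
      simp only [mul_assoc]
      congr 1
      rw [← mul_assoc, ← Algebra.commutes, mul_assoc]
    calc ψ (x.map (algebraMap ℂ A) * dd * y.map (algebraMap ℂ A) * dd)
        = ∑ i, (lam i : ℂ) * ∑ k, x i k * y k i * t k i := by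
          apply Finset.sum_congr rfl
          intro i _
          rw [hentry i, map_sum]
          refine congrArg _ (Finset.sum_congr rfl fun k _ => ?_)
          rw [← Algebra.smul_def, map_smul, smul_eq_mul, ht]
      _ = _ := by
          rw [Matrix.trace]
          apply Finset.sum_congr rfl
          intro i _
          rw [Matrix.diag_apply, Matrix.diagonal_mul, Matrix.mul_apply, Finset.mul_sum, Finset.mul_sum]
          apply Finset.sum_congr rfl
          intro k _
          have : t k i = t i k := by rw [← ht, ← ht, htr]
          simp only [Matrix.of_apply]
          rw [this]; ring
end

section
/- Let T be a self-adjoint contraction on a Hilbert space K, and let U be a unitary on a Hilbert space L ⊇ K that is a strong dilation of T, i.e., P U^k |_K = T^k for all k ≥ 0, where P is the orthogonal projection of L onto K. Let K_n be the closed span of ∪_{l≥n} U^l(K) and P_n the orthogonal projection onto K_n. Then P P_n P = T^{2n} (as operators on K) for all n ≥ 0. -/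
/-!
For `x ∈ K` the vector `v = Uⁿ Tⁿ x` lies in `K_n`, and `x - v` is orthogonal to every
`U^(n+m) y` with `y ∈ K`: both `⟪x, U^(n+m) y⟫` and `⟪Uⁿ Tⁿ x, Uⁿ U^m y⟫ = ⟪Tⁿ x, T^m y⟫` equal
`⟪x, T^(n+m) y⟫`, by the dilation property and self-adjointness of `T`. Hence `P_n x = Uⁿ Tⁿ x`,
and projecting once more onto `K` gives `Tⁿ Tⁿ x = T^(2n) x`.
-/

open scoped InnerProductSpace

namespace Submodule

variable {𝕜 E : Type*} [RCLike 𝕜] [NormedAddCommGroup E] [InnerProductSpace 𝕜 E]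

theorem starProjection_topologicalClosure_eq_of_mem_orthogonal {S : Submodule 𝕜 E}
    [S.topologicalClosure.HasOrthogonalProjection] {u v : E} (hv : v ∈ S) (huv : u - v ∈ Sᗮ) :
    S.topologicalClosure.starProjection u = v :=
  eq_starProjection_of_mem_orthogonal (S.le_topologicalClosure hv)
    (by rwa [orthogonal_closure])

end Submodule

section StrongDilation

variable {𝕜 L : Type*} [RCLike 𝕜] [NormedAddCommGroup L] [InnerProductSpace 𝕜 L]
  {K : Submodule 𝕜 L} [CompleteSpace K] {T : K →L[𝕜] K} {U : L ≃ₗᵢ[𝕜] L}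

theorem inner_pow_apply_eq_of_dilation
    (hdil : ∀ (k : ℕ) (x : K), K.orthogonalProjectionOnto ((U ^ k) (x : L)) = (T ^ k) x)
    (k : ℕ) (x y : K) : ⟪(x : L), (U ^ k) y⟫_𝕜 = ⟪x, (T ^ k) y⟫_𝕜 := by
  rw [← hdil, Submodule.inner_orthogonalProjectionOnto_eq_of_mem_left]

theorem inner_pow_pow_apply_eq_of_dilation (hsa : IsSelfAdjoint T)
    (hdil : ∀ (k : ℕ) (x : K), K.orthogonalProjectionOnto ((U ^ k) (x : L)) = (T ^ k) x)
    {n l : ℕ} (hnl : n ≤ l) (x y : K) :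
    ⟪(U ^ n) ((T ^ n) x : L), (U ^ l) y⟫_𝕜 = ⟪(x : L), (U ^ l) y⟫_𝕜 := by
  obtain ⟨m, rfl⟩ := Nat.exists_eq_add_of_le hnl
  calc ⟪(U ^ n) ((T ^ n) x : L), (U ^ (n + m)) y⟫_𝕜
      = ⟪((T ^ n) x : L), (U ^ m) y⟫_𝕜 := by
        rw [pow_add]
        exact LinearIsometryEquiv.inner_map_map _ _ _
    _ = ⟪(T ^ n) x, (T ^ m) y⟫_𝕜 := inner_pow_apply_eq_of_dilation hdil m _ y
    _ = ⟪x, (T ^ (n + m)) y⟫_𝕜 := by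
        rw [pow_add]
        exact (hsa.pow n).isSymmetric x _
    _ = ⟪(x : L), (U ^ (n + m)) y⟫_𝕜 := (inner_pow_apply_eq_of_dilation hdil _ x y).symm

theorem sub_pow_pow_apply_mem_orthogonal_of_dilation (hsa : IsSelfAdjoint T)
    (hdil : ∀ (k : ℕ) (x : K), K.orthogonalProjectionOnto ((U ^ k) (x : L)) = (T ^ k) x)
    (n : ℕ) (x : K) :
    (x : L) - (U ^ n) ((T ^ n) x : L) ∈
      (⨆ l ∈ Set.Ici n, Submodule.map ((U ^ l : L ≃ₗᵢ[𝕜] L) : L →ₗ[𝕜] L) K)ᗮ := by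
  rw [Submodule.mem_orthogonal']
  refine fun u hu ↦ (iSup₂_le fun l hl ↦ ?_ : _ ≤ LinearMap.ker (innerₛₗ 𝕜 _)) hu
  rintro _ ⟨y, hy, rfl⟩
  rw [LinearMap.mem_ker, innerₛₗ_apply_apply, inner_sub_left, sub_eq_zero]
  exact (inner_pow_pow_apply_eq_of_dilation hsa hdil hl x ⟨y, hy⟩).symm

end StrongDilation

theorem stmt10_general {L : Type*} [NormedAddCommGroup L] [InnerProductSpace ℂ L]
    (K : Submodule ℂ L) [CompleteSpace K]
    (T : K →L[ℂ] K) (hsa : IsSelfAdjoint T)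
    (U : L ≃ₗᵢ[ℂ] L)
    (hdil : ∀ (k : ℕ) (x : K), K.orthogonalProjectionOnto ((U ^ k) (x : L)) = (T ^ k) x)
    (n : ℕ) (Kn : Submodule ℂ L)
    (hKn : Kn = (⨆ l ∈ Set.Ici n,
      Submodule.map ((U ^ l : L ≃ₗᵢ[ℂ] L) : L →ₗ[ℂ] L) K).topologicalClosure)
    [CompleteSpace Kn] :
    ∀ x : K, K.orthogonalProjectionOnto ((Kn.orthogonalProjectionOnto (x : L) : L))
      = (T ^ (2 * n)) x := by
  intro x
  subst hKn
  have hv : (U ^ n) ((T ^ n) x : L) ∈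
      ⨆ l ∈ Set.Ici n, Submodule.map ((U ^ l : L ≃ₗᵢ[ℂ] L) : L →ₗ[ℂ] L) K :=
    Submodule.mem_iSup_of_mem n <|
      Submodule.mem_iSup_of_mem (Set.mem_Ici.2 le_rfl) ⟨_, ((T ^ n) x).2, rfl⟩
  rw [← Submodule.starProjection_apply,
    Submodule.starProjection_topologicalClosure_eq_of_mem_orthogonal hv
      (sub_pow_pow_apply_mem_orthogonal_of_dilation hsa hdil n x),
    hdil, two_mul, pow_add]
  rfl

/-- If `U` is a unitary strong dilation of the self-adjoint contraction `T`
(`P U^k |_K = T^k` for all `k ≥ 0`), and `P_n` is the orthogonal projection onto the closed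
span `K_n` of `∪_{l ≥ n} U^l(K)`, then `P P_n P = T^{2n}` as operators on `K`. -/
theorem stmt10 {L : Type*} [NormedAddCommGroup L] [InnerProductSpace ℂ L] [CompleteSpace L]
    (K : Submodule ℂ L) [CompleteSpace K]
    (T : K →L[ℂ] K) (hsa : IsSelfAdjoint T) (hcontr : ‖T‖ ≤ 1)
    (U : L ≃ₗᵢ[ℂ] L)
    (hdil : ∀ (k : ℕ) (x : K), K.orthogonalProjectionOnto ((U ^ k) (x : L)) = (T ^ k) x)
    (n : ℕ) (Kn : Submodule ℂ L)
    (hKn : Kn = (⨆ l ∈ Set.Ici n,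
      Submodule.map ((U ^ l : L ≃ₗᵢ[ℂ] L) : L →ₗ[ℂ] L) K).topologicalClosure)
    [CompleteSpace Kn] :
    ∀ x : K, K.orthogonalProjectionOnto ((Kn.orthogonalProjectionOnto (x : L) : L))
      = (T ^ (2 * n)) x :=
  stmt10_general K T hsa U hdil n Kn hKn
end

section
/- With notation as above (U a strong unitary dilation of the self-adjoint contraction T, P_n the projection onto K_n = span{U^l(K) : l ≥ n}), one has P_n P(k) = U^n(T^n(k)) for every k ∈ K. -/
/-!
The vector `u = U ^ n (T ^ n k)` lies in `U ^ n K ⊆ K_n`, so it suffices that `k - u ⊥ U ^ l K` for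
every `l ≥ n`. For `x ∈ K`, compressing `U ^ l` and `U ^ (l - n)` to `K` and using `T = T*` gives
`⟪U ^ l x, u⟫ = ⟪T ^ (l - n) x, T ^ n k⟫ = ⟪T ^ l x, k⟫ = ⟪U ^ l x, k⟫`.
-/

open scoped ComplexInnerProductSpace InnerProductSpace

theorem Submodule.mem_orthogonal_topologicalClosure_biSup_iff {𝕜 E ι : Type*} [RCLike 𝕜]
    [NormedAddCommGroup E] [InnerProductSpace 𝕜 E] (s : Set ι) (V : ι → Submodule 𝕜 E) (x : E) :
    x ∈ (⨆ i ∈ s, V i).topologicalClosureᗮ ↔ ∀ i ∈ s, ∀ y ∈ V i, ⟪y, x⟫_𝕜 = 0 := by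
  simp only [Submodule.orthogonal_closure, ← Submodule.mem_orthogonal, ← Submodule.mem_iInf,
    (Submodule.orthogonal_gc 𝕜 E).l_iSup₂]
  rfl

theorem IsSelfAdjoint.inner_pow_apply_pow_apply {𝕜 E : Type*} [RCLike 𝕜] [NormedAddCommGroup E]
    [InnerProductSpace 𝕜 E] [CompleteSpace E] {T : E →L[𝕜] E} (hT : IsSelfAdjoint T)
    (a b : ℕ) (x y : E) : ⟪(T ^ a) x, (T ^ b) y⟫_𝕜 = ⟪(T ^ (b + a)) x, y⟫_𝕜 := by
  calc ⟪(T ^ a) x, (T ^ b) y⟫_𝕜 = ⟪(T ^ b) ((T ^ a) x), y⟫_𝕜 := ((hT.pow b).isSymmetric _ _).symm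
    _ = ⟪(T ^ (b + a)) x, y⟫_𝕜 := by rw [pow_add, mul_apply_eq_comp]

section Dilation

variable {L : Type*} [NormedAddCommGroup L] [InnerProductSpace ℂ L]
  {K : Submodule ℂ L} [CompleteSpace K] {T : K →L[ℂ] K} {U : L ≃ₗᵢ[ℂ] L}

theorem inner_pow_apply_eq_of_compression
    (hdil : ∀ (k : ℕ) (x : K), K.orthogonalProjectionOnto ((U ^ k) (x : L)) = (T ^ k) x)
    (m : ℕ) (x y : K) : ⟪(U ^ m) (x : L), (y : L)⟫ = ⟪((T ^ m) x : L), (y : L)⟫ := by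
  rw [← Submodule.inner_orthogonalProjectionOnto_eq_of_mem_right, hdil, Submodule.coe_inner]

theorem inner_pow_apply_pow_apply_pow_apply_eq_of_le
    (hdil : ∀ (k : ℕ) (x : K), K.orthogonalProjectionOnto ((U ^ k) (x : L)) = (T ^ k) x)
    (hsa : IsSelfAdjoint T) {n l : ℕ} (hnl : n ≤ l) (x k : K) :
    ⟪(U ^ l) (x : L), (U ^ n) ((T ^ n) k : L)⟫ = ⟪(U ^ l) (x : L), (k : L)⟫ := by
  obtain ⟨m, rfl⟩ := Nat.exists_eq_add_of_le hnl
  calc ⟪(U ^ (n + m)) (x : L), (U ^ n) ((T ^ n) k : L)⟫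
      = ⟪(U ^ m) (x : L), ((T ^ n) k : L)⟫ := by
        rw [pow_add, LinearIsometryEquiv.coe_mul, Function.comp_apply,
          LinearIsometryEquiv.inner_map_map]
    _ = ⟪(T ^ m) x, (T ^ n) k⟫ := inner_pow_apply_eq_of_compression hdil m _ _
    _ = ⟪(T ^ (n + m)) x, k⟫ := hsa.inner_pow_apply_pow_apply m n x k
    _ = ⟪(U ^ (n + m)) (x : L), (k : L)⟫ :=
        (inner_pow_apply_eq_of_compression hdil _ x k).symm

end Dilation

theorem stmt11_general {L : Type*} [NormedAddCommGroup L] [InnerProductSpace ℂ L]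
    (K : Submodule ℂ L) [CompleteSpace K]
    (T : K →L[ℂ] K) (hsa : IsSelfAdjoint T)
    (U : L ≃ₗᵢ[ℂ] L)
    (hdil : ∀ (k : ℕ) (x : K), K.orthogonalProjectionOnto ((U ^ k) (x : L)) = (T ^ k) x)
    (n : ℕ) (Kn : Submodule ℂ L)
    (hKn : Kn = (⨆ l ∈ Set.Ici n,
      Submodule.map ((U ^ l : L ≃ₗᵢ[ℂ] L) : L →ₗ[ℂ] L) K).topologicalClosure)
    [CompleteSpace Kn] :
    ∀ k : K, (Kn.orthogonalProjectionOnto (k : L) : L) = (U ^ n) (((T ^ n) k : K) : L) := by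
  intro k
  have hmem : (U ^ n) ((T ^ n) k : L) ∈ Kn := by
    rw [hKn]
    refine Submodule.le_topologicalClosure _
      (Submodule.mem_iSup_of_mem n (Submodule.mem_iSup_of_mem Set.self_mem_Ici ?_))
    exact Submodule.mem_map_of_mem ((T ^ n) k).2
  have hperp : (k : L) - (U ^ n) ((T ^ n) k : L) ∈ Knᗮ := by
    rw [hKn, Submodule.mem_orthogonal_topologicalClosure_biSup_iff]
    rintro l hl _ ⟨x, hx, rfl⟩
    rw [inner_sub_right]
    exact sub_eq_zero.2 (inner_pow_apply_pow_apply_pow_apply_eq_of_le hdil hsa hl ⟨x, hx⟩ k).symm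
  rw [← Submodule.starProjection_apply]
  exact Submodule.eq_starProjection_of_mem_orthogonal hmem hperp

/-- With `U` a strong unitary dilation of the self-adjoint contraction `T` and
`P_n` the orthogonal projection onto `K_n = closed span of {U^l(K) : l ≥ n}`, one has
`P_n P(k) = U^n(T^n(k))` for every `k ∈ K`. -/
theorem stmt11 {L : Type*} [NormedAddCommGroup L] [InnerProductSpace ℂ L] [CompleteSpace L]
    (K : Submodule ℂ L) [CompleteSpace K]
    (T : K →L[ℂ] K) (hsa : IsSelfAdjoint T) (hcontr : ‖T‖ ≤ 1)
    (U : L ≃ₗᵢ[ℂ] L)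
    (hdil : ∀ (k : ℕ) (x : K), K.orthogonalProjectionOnto ((U ^ k) (x : L)) = (T ^ k) x)
    (n : ℕ) (Kn : Submodule ℂ L)
    (hKn : Kn = (⨆ l ∈ Set.Ici n,
      Submodule.map ((U ^ l : L ≃ₗᵢ[ℂ] L) : L →ₗ[ℂ] L) K).topologicalClosure)
    [CompleteSpace Kn] :
    ∀ k : K, (Kn.orthogonalProjectionOnto (k : L) : L) = (U ^ n) (((T ^ n) k : K) : L) :=
  stmt11_general K T hsa U hdil n Kn hKn
end

section
/- Every self-adjoint contraction T on a real (or complex) Hilbert space K can be dilated to a self-adjoint unitary (symmetry) U on L = K ⊕ K, i.e., there is a self-adjoint U with U² = 1 on K ⊕ K such that P U |_K = T, where P is the projection onto the first coordinate. Explicitly, U = [[T, √(1−T²)], [√(1−T²), −T]] works. -/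
/-!
With `D = √(1 - T²)`, which is self-adjoint, commutes with `T` and satisfies `T² + D² = 1`,
the block operator `U = [[T, D], [D, -T]]` is self-adjoint and
`U² = [[T² + D², TD - DT], [DT - TD, D² + T²]] = 1`.
-/

section CStarAlgebra

variable {A : Type*} [CStarAlgebra A] [PartialOrder A] [StarOrderedRing A]

lemma IsSelfAdjoint.one_sub_sq_nonneg {a : A} (ha : IsSelfAdjoint a) (ha_norm : ‖a‖ ≤ 1) :
    0 ≤ 1 - a ^ 2 := by
  rwa [sub_nonneg, ← CStarAlgebra.norm_le_one_iff_of_nonneg (a ^ 2), sq, ha.norm_mul_self,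
    sq_le_one_iff₀ (norm_nonneg a)]

lemma IsSelfAdjoint.mul_self_add_cfcSqrt_one_sub_sq_mul_self {a : A} (ha : IsSelfAdjoint a)
    (ha_norm : ‖a‖ ≤ 1) : a * a + CFC.sqrt (1 - a ^ 2) * CFC.sqrt (1 - a ^ 2) = 1 := by
  rw [CFC.sqrt_mul_sqrt_self _ (ha.one_sub_sq_nonneg ha_norm), ← sq, add_sub_cancel]

lemma commute_cfcSqrt_one_sub_sq (a : A) : Commute a (CFC.sqrt (1 - a ^ 2)) :=
  ((Commute.one_right a).sub_right ((Commute.refl a).pow_right 2)).symm.cfcₙ_nnreal _ |>.symm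

end CStarAlgebra

namespace ContinuousLinearMap

variable {𝕜 E : Type*} [RCLike 𝕜] [NormedAddCommGroup E] [InnerProductSpace 𝕜 E]

noncomputable def symmetryBlock (a b : E →L[𝕜] E) : WithLp 2 (E × E) →L[𝕜] WithLp 2 (E × E) :=
  (WithLp.prodContinuousLinearEquiv 2 𝕜 E E).symm.toContinuousLinearMap ∘L
    ((a.coprod b).prod (b.coprod (-a))) ∘L
    (WithLp.prodContinuousLinearEquiv 2 𝕜 E E).toContinuousLinearMap

@[simp]
lemma symmetryBlock_apply (a b : E →L[𝕜] E) (v : WithLp 2 (E × E)) :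
    symmetryBlock a b v = WithLp.toLp 2 (a v.fst + b v.snd, b v.fst - a v.snd) := by
  simp [symmetryBlock, sub_eq_add_neg]

variable {a b : E →L[𝕜] E}

lemma isSelfAdjoint_symmetryBlock [CompleteSpace E] (ha : IsSelfAdjoint a)
    (hb : IsSelfAdjoint b) : IsSelfAdjoint (symmetryBlock a b) := by
  rw [isSelfAdjoint_iff_isSymmetric]
  intro v w
  simp only [coe_coe, symmetryBlock_apply, WithLp.prod_inner_apply, WithLp.ofLp_fst,
    WithLp.ofLp_snd, inner_add_left, inner_add_right, inner_sub_left, inner_sub_right,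
    ha.isSymmetric.apply_clm, hb.isSymmetric.apply_clm]
  ring

lemma symmetryBlock_comp_self (hab : Commute a b) (hsq : a * a + b * b = 1) :
    symmetryBlock a b ∘L symmetryBlock a b = 1 := by
  have hsq' (x : E) : a (a x) + b (b x) = x := congr($hsq x)
  have hab' (x : E) : a (b x) = b (a x) := congr($hab.eq x)
  ext v
  simp only [comp_apply, symmetryBlock_apply, WithLp.toLp_fst, WithLp.toLp_snd, map_add, map_sub,
    hab', add_add_sub_cancel, add_sub_sub_cancel, add_comm (b (b _)), hsq', one_apply_eq_self]
  rfl

end ContinuousLinearMap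

/-- Every self-adjoint contraction `T` on a Hilbert space `K` dilates to a
self-adjoint unitary `U` on `K ⊕ K` (with the `ℓ²` inner product): `U* = U`, `U² = 1` and
`P U |_K = T` where `P` is the projection onto the first coordinate. -/
theorem stmt12 {K : Type*} [NormedAddCommGroup K] [InnerProductSpace ℂ K] [CompleteSpace K]
    (T : K →L[ℂ] K) (hsa : IsSelfAdjoint T) (hcontr : ‖T‖ ≤ 1) :
    ∃ U : WithLp 2 (K × K) →L[ℂ] WithLp 2 (K × K),
      IsSelfAdjoint U ∧ U ∘L U = 1 ∧
      ∀ x : K, ((WithLp.equiv 2 (K × K)) (U ((WithLp.equiv 2 (K × K)).symm (x, 0)))).1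
        = T x := by
  refine ⟨ContinuousLinearMap.symmetryBlock T (CFC.sqrt (1 - T ^ 2)),
    ContinuousLinearMap.isSelfAdjoint_symmetryBlock hsa (CFC.sqrt_nonneg _).isSelfAdjoint,
    ContinuousLinearMap.symmetryBlock_comp_self (commute_cfcSqrt_one_sub_sq T)
      (hsa.mul_self_add_cfcSqrt_one_sub_sq_mul_self hcontr),
    fun x => ?_⟩
  simp
end

section
/- Let G be a finite group, t : G → ℝ positive definite with t_e = 1 and t_g = t_{g⁻¹}. Suppose (A, τ) is a unital C*-algebra with faithful trace carrying an action α of G by trace-preserving automorphisms, and w ∈ A is a self-adjoint unitary such that τ(α(g⁻¹).(w) · w) = t_g for all g ∈ G. In the crossed product (reduced) A ⋊_α G with canonical trace φ̃, set π(λ(g)) = λ(g) and ρ(x) = w π(x) w for x in the group algebra. Then φ̃(π(λ(g)) ρ(λ(h))) = δ_{gh,e} t_g = τ_G(M_t(λ(g)) λ(h)), where M_t is the Fourier multiplier λ(g) ↦ t_g λ(g) and τ_G is the canonical trace on the group von Neumann algebra. -/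
/-!
Covariance lets `λ(g)` pass to the right of `ι(a)` at the cost of twisting `a` by `α(g)`, so
`λ(g) ι(w) λ(h) ι(w) = ι(α(g)(w) α(gh)(w)) λ(gh)`. The canonical trace of this vanishes unless
`gh = e`, and then it is `τ(α(g)(w) w) = t_{g⁻¹} = t_g`.
-/

theorem lam_mul_eq_mul_lam {G A B : Type*} [Group G] [Monoid B] (ι : A → B) (α : G → A → A)
    (lam : G → B) (hlammul : ∀ g h : G, lam g * lam h = lam (g * h)) (hlam1 : lam 1 = 1)
    (hcov : ∀ (g : G) (a : A), lam g * ι a * lam g⁻¹ = ι (α g a)) (g : G) (a : A) :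
    lam g * ι a = ι (α g a) * lam g := by
  calc lam g * ι a = lam g * ι a * (lam g⁻¹ * lam g) := by
        rw [hlammul, inv_mul_cancel, hlam1, mul_one]
    _ = ι (α g a) * lam g := by rw [← hcov, mul_assoc _ (lam g⁻¹)]

theorem lam_mul_conj_lam_eq {G A B F : Type*} [Group G] [Mul A] [Monoid B] [FunLike F A B]
    [MulHomClass F A B] (ι : F) (α : G → A → A) (lam : G → B)
    (hlammul : ∀ g h : G, lam g * lam h = lam (g * h)) (hlam1 : lam 1 = 1)
    (hcov : ∀ (g : G) (a : A), lam g * ι a * lam g⁻¹ = ι (α g a)) (g h : G) (w : A) :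
    lam g * (ι w * lam h * ι w) = ι (α g w * α (g * h) w) * lam (g * h) := by
  have swap := lam_mul_eq_mul_lam ι α lam hlammul hlam1 hcov
  calc lam g * (ι w * lam h * ι w)
      = (lam g * ι w) * lam h * ι w := by simp only [mul_assoc]
    _ = ι (α g w) * (lam g * lam h * ι w) := by rw [swap]; simp only [mul_assoc]
    _ = ι (α g w) * ι (α (g * h) w) * lam (g * h) := by rw [hlammul, swap, mul_assoc]
    _ = ι (α g w * α (g * h) w) * lam (g * h) := by rw [map_mul]

theorem MonoidAlgebra.coeff_single_mul_single_one {k G : Type*} [Semiring k] [Group G]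
    [DecidableEq G] (g h : G) (c : k) :
    (MonoidAlgebra.single g c * MonoidAlgebra.single h 1).coeff 1 =
      if g * h = 1 then c else 0 := by
  rw [MonoidAlgebra.single_mul_single, mul_one, MonoidAlgebra.coeff_single, Finsupp.single_apply]

theorem stmt14_general {G : Type*} [Group G] [DecidableEq G]
    {A B : Type*} [Ring A] [StarRing A] [Algebra ℂ A] [Ring B] [StarRing B] [Algebra ℂ B]
    (t : G → ℝ) (htsym : ∀ g : G, t g = t g⁻¹)
    (τ : A →ₗ[ℂ] ℂ) (α : G → (A ≃⋆ₐ[ℂ] A)) (hα1 : ∀ a : A, α 1 a = a)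
    (w : A) (hwt : ∀ g : G, τ ((α g⁻¹) w * w) = (t g : ℂ))
    (ι : A →⋆ₐ[ℂ] B) (lam : G → B)
    (hlammul : ∀ g h : G, lam g * lam h = lam (g * h)) (hlam1 : lam 1 = 1)
    (hcov : ∀ (g : G) (a : A), lam g * ι a * lam g⁻¹ = ι ((α g) a)) (φt : B →ₗ[ℂ] ℂ)
    (hφt : ∀ (a : A) (g : G), φt (ι a * lam g) = if g = 1 then τ a else 0) :
    ∀ g h : G,
      φt (lam g * (ι w * lam h * ι w)) = (if g * h = 1 then (t g : ℂ) else 0) ∧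
      φt (lam g * (ι w * lam h * ι w))
        = ((MonoidAlgebra.single g ((t g : ℂ)) * MonoidAlgebra.single h (1 : ℂ) :
            MonoidAlgebra ℂ G).coeff 1) := by
  intro g h
  have trace_eq : φt (lam g * (ι w * lam h * ι w)) = if g * h = 1 then (t g : ℂ) else 0 := by
    rw [lam_mul_conj_lam_eq ι (fun g => α g) lam hlammul hlam1 hcov, hφt]
    split_ifs with hgh
    · simpa [hgh, hα1, ← htsym g] using hwt g⁻¹
    · rfl
  exact ⟨trace_eq, by rw [trace_eq, MonoidAlgebra.coeff_single_mul_single_one]⟩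

/-- In a reduced crossed product `A ⋊_α G` (abstractly axiomatized: unitaries
`λ(g)`, an embedding `ι` of `A`, covariance `λ(g) ι(a) λ(g)⁻¹ = ι(α(g).a)`, and canonical
trace `φ̃(ι(a)λ(g)) = τ(a) δ_{g,e}`), if `w` is a self-adjoint unitary of `A` with
`τ(α(g⁻¹).(w)·w) = t_g`, then for `π(λ(g)) = λ(g)` and `ρ(x) = ι(w) π(x) ι(w)` one has
`φ̃(π(λ(g)) ρ(λ(h))) = δ_{gh,e} t_g = τ_G(M_t(λ(g)) λ(h))`. -/
theorem stmt14 {G : Type*} [Group G] [Fintype G] [DecidableEq G]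
    {A B : Type*} [Ring A] [StarRing A] [Algebra ℂ A] [StarModule ℂ A]
    [Ring B] [StarRing B] [Algebra ℂ B] [StarModule ℂ B]
    (t : G → ℝ) (ht1 : t 1 = 1) (htsym : ∀ g : G, t g = t g⁻¹)
    (hpd : ∀ (m : ℕ) (g : Fin m → G) (a : Fin m → ℝ),
      0 ≤ ∑ i, ∑ j, a i * a j * t ((g i)⁻¹ * g j))
    (τ : A →ₗ[ℂ] ℂ) (hτ1 : τ 1 = 1) (htr : ∀ a b, τ (a * b) = τ (b * a))
    (hfaith : ∀ a, τ (star a * a) = 0 → a = 0)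
    (α : G → (A ≃⋆ₐ[ℂ] A)) (hαmul : ∀ (g h : G) (a : A), α g (α h a) = α (g * h) a)
    (hα1 : ∀ a : A, α 1 a = a) (hα : ∀ (g : G) (a : A), τ (α g a) = τ a)
    (w : A) (hwsa : IsSelfAdjoint w) (hwsq : w * w = 1)
    (hwt : ∀ g : G, τ ((α g⁻¹) w * w) = (t g : ℂ))
    (ι : A →⋆ₐ[ℂ] B) (lam : G → B)
    (hlammul : ∀ g h : G, lam g * lam h = lam (g * h))
    (hlamstar : ∀ g : G, star (lam g) = lam g⁻¹) (hlam1 : lam 1 = 1)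
    (hcov : ∀ (g : G) (a : A), lam g * ι a * lam g⁻¹ = ι ((α g) a))
    (φt : B →ₗ[ℂ] ℂ) (hφtfaith : ∀ b, φt (star b * b) = 0 → b = 0)
    (hφttr : ∀ b c, φt (b * c) = φt (c * b))
    (hφt : ∀ (a : A) (g : G), φt (ι a * lam g) = if g = 1 then τ a else 0) :
    ∀ g h : G,
      φt (lam g * (ι w * lam h * ι w)) = (if g * h = 1 then (t g : ℂ) else 0) ∧
      φt (lam g * (ι w * lam h * ι w))
        = ((MonoidAlgebra.single g ((t g : ℂ)) * MonoidAlgebra.single h (1 : ℂ) :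
            MonoidAlgebra ℂ G).coeff 1) :=
  stmt14_general t htsym τ α hα1 w hwt ι lam hlammul hlam1 hcov φt hφt
end

section
/- Identification of Markov dilation for Schur multipliers, finite-dimensional model: let T be a real symmetric positive semidefinite n × n matrix with unit diagonal, and let d_1,...,d_n be symmetries in a finite-dimensional C*-algebra (A, τ) with τ faithful tracial and τ(d_i d_j) = t_{i,j} (such exist, e.g., in a Clifford algebra). Define Φ : M_n(ℂ) → M_n(ℂ) ⊗ A by Φ(x) = d(x ⊗ 1)d with d = Σ_i e_{i,i} ⊗ d_i. Then Φ is a unital *-homomorphism, and (Tr/n ⊗ τ)((x⊗1)Φ(y)) = (Tr/n)(M_T(x) y) for all x, y ∈ M_n(ℂ). -/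
open scoped ComplexOrder

/-- Finite-dimensional model of the Markov dilation for Schur multipliers: for
a real symmetric PSD matrix `T` with unit diagonal and symmetries `d₁,…,dₙ` in a
finite-dimensional C*-algebra `(A,τ)` with `τ(dᵢdⱼ) = t_{i,j}`, the map
`Φ(x) = d(x⊗1)d`, `d = Σᵢ e_{i,i} ⊗ dᵢ`, is a unital *-homomorphism and
`(Tr/n ⊗ τ)((x⊗1)Φ(y)) = (Tr/n)(M_T(x)y)` for all `x, y ∈ Mₙ(ℂ)`. -/
theorem stmt19 {n : ℕ} (T : Matrix (Fin n) (Fin n) ℝ) (hsymm : T.IsSymm)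
    (hTpos : T.PosSemidef) (hTdiag : ∀ i, T i i = 1)
    {A : Type*} [NormedRing A] [StarRing A] [CStarRing A] [NormedAlgebra ℂ A]
    [StarModule ℂ A] [FiniteDimensional ℂ A]
    (τ : A →ₗ[ℂ] ℂ) (hτ1 : τ 1 = 1) (hτpos : ∀ a, 0 ≤ τ (star a * a))
    (htr : ∀ a b, τ (a * b) = τ (b * a)) (hfaith : ∀ a, τ (star a * a) = 0 → a = 0)
    (d : Fin n → A) (hsa : ∀ i, IsSelfAdjoint (d i)) (hsq : ∀ i, d i * d i = 1)
    (ht : ∀ i j, τ (d i * d j) = ((T i j : ℝ) : ℂ)) :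
    let dd : Matrix (Fin n) (Fin n) A := Matrix.diagonal d
    let Φ : Matrix (Fin n) (Fin n) ℂ → Matrix (Fin n) (Fin n) A :=
      fun x => dd * x.map (algebraMap ℂ A) * dd
    (Φ 1 = 1) ∧ (∀ x y, Φ (x * y) = Φ x * Φ y) ∧ (∀ x, Φ (star x) = star (Φ x)) ∧
    (∀ x y, Φ (x + y) = Φ x + Φ y) ∧ (∀ (c : ℂ) (x), Φ (c • x) = c • Φ x) ∧
    ∀ x y : Matrix (Fin n) (Fin n) ℂ,
      ((1 : ℂ) / n) * ∑ i, τ ((x.map (algebraMap ℂ A) * Φ y) i i)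
        = ((1 : ℂ) / n) *
            ((Matrix.of fun i j => ((T i j : ℝ) : ℂ) * x i j) * y).trace := by

  intro dd Φ
  have hdd2 : dd * dd = 1 := by
    simp only [dd, Matrix.diagonal_mul_diagonal]
    rw [show (fun i => d i * d i) = fun _ => (1 : A) by funext i; exact hsq i]
    exact Matrix.diagonal_one
  have hmap : ∀ x y : Matrix (Fin n) (Fin n) ℂ,
      (x * y).map (algebraMap ℂ A) = x.map (algebraMap ℂ A) * y.map (algebraMap ℂ A) :=
    fun x y => Matrix.map_mul
  have hΦ : ∀ (z : Matrix (Fin n) (Fin n) ℂ) i j, (Φ z) i j = z i j • (d i * d j) := by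
    intro z i j
    simp only [Φ, dd, Matrix.mul_diagonal, Matrix.diagonal_mul, Matrix.map_apply,
      Algebra.algebraMap_eq_smul_one, smul_mul_assoc, one_mul, mul_one, mul_smul_comm]
  refine ⟨?_, ?_, ?_, ?_, ?_, ?_⟩
  · simp only [Φ, Matrix.map_one (algebraMap ℂ A) (map_zero _) (map_one _), mul_one, hdd2]
  · intro x y
    simp only [Φ, hmap]
    calc dd * (x.map (algebraMap ℂ A) * y.map (algebraMap ℂ A)) * dd
        = dd * x.map (algebraMap ℂ A) * (dd * dd) * y.map (algebraMap ℂ A) * dd := by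
          rw [hdd2]; noncomm_ring
      _ = dd * x.map (algebraMap ℂ A) * dd * (dd * y.map (algebraMap ℂ A) * dd) := by
          noncomm_ring
  · intro x
    have hddsa : star dd = dd := by
      show dd.conjTranspose = dd
      simp only [dd, Matrix.diagonal_conjTranspose]
      rw [show star d = d from funext fun i => hsa i]
    have hxmap : (star x).map (algebraMap ℂ A) = star (x.map (algebraMap ℂ A)) := by
      show x.conjTranspose.map _ = (x.map _).conjTranspose
      exact Matrix.conjTranspose_map _ fun c => algebraMap_star_comm c
    simp only [Φ, hxmap, star_mul, hddsa, mul_assoc]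
  · intro x y
    have : (x + y).map (algebraMap ℂ A) = x.map (algebraMap ℂ A) + y.map (algebraMap ℂ A) := by
      ext i j; simp
    simp only [Φ, this]
    noncomm_ring
  · intro c x
    have : (c • x).map (algebraMap ℂ A) = c • x.map (algebraMap ℂ A) := by
      ext i j
      simp only [Matrix.map_apply, Matrix.smul_apply, smul_eq_mul, map_mul]
      rw [Algebra.smul_def]
    simp only [Φ, this, Matrix.mul_smul, Matrix.smul_mul]
  · intro x y
    congr 1
    have key : ∀ i, τ ((x.map (algebraMap ℂ A) * Φ y) i i)
        = ∑ j, ((T i j : ℝ) : ℂ) * x i j * y j i := by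
      intro i
      have h1 : (x.map (algebraMap ℂ A) * Φ y) i i
          = ∑ j, (x i j * y j i) • (d j * d i) := by
        rw [Matrix.mul_apply]
        refine Finset.sum_congr rfl fun j _ => ?_
        rw [hΦ, Matrix.map_apply, Algebra.algebraMap_eq_smul_one, smul_mul_assoc,
          one_mul, smul_smul]
      rw [h1, map_sum]
      refine Finset.sum_congr rfl fun j _ => ?_
      rw [LinearMap.map_smul, smul_eq_mul, ht j i, hsymm.apply i j]
      ring
    calc ∑ i, τ ((x.map (algebraMap ℂ A) * Φ y) i i)
        = ∑ i, ∑ j, ((T i j : ℝ) : ℂ) * x i j * y j i :=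
          Finset.sum_congr rfl fun i _ => key i
      _ = ((Matrix.of fun i j => ((T i j : ℝ) : ℂ) * x i j) * y).trace := by
          simp [Matrix.trace, Matrix.diag, Matrix.mul_apply, mul_assoc]
end
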